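/- (Step 1 in the proof of Proposition 3.5.) Assume p > 1 and hypotheses (H0), (H1), (h0), (h1) hold. Let (u_n) ⊂ X be a Palais–Smale sequence for J_λ at some level β with ‖u_n‖ → +∞, set v_n = u_n/‖u_n‖, and suppose v_n ⇀ v weakly in W^{1,p}_0(Ω) and v_n → v strongly in L^p(Ω). Then v ≢ 0. -/

import Mathlib

open MeasureTheory Filter Set

noncomputable section

abbrev EN (N : ℕ) := EuclideanSpace ℝ (Fin N)

/-- A Carathéodory function on `Ω × ℝ`. -/
def Caratheodory {N : ℕ} (Ω : Set (EN N)) (A : EN N → ℝ → ℝ) : Prop :=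
  (∀ t : ℝ, Measurable fun x => A x t) ∧
    ∀ᵐ x ∂(volume.restrict Ω), Continuous fun t => A x t

/-- `(H0)`-type essential boundedness. -/
def H0bound {N : ℕ} (Ω : Set (EN N)) (A : EN N → ℝ → ℝ) : Prop :=
  ∀ r > (0 : ℝ), ∃ C : ℝ, ∀ᵐ x ∂(volume.restrict Ω), ∀ t : ℝ, |t| ≤ r → |A x t| ≤ C

/-- `u ∈ W^{1,p}_0(Ω)` with weak gradient `Du`. -/
def MemW1p0 {N : ℕ} (p : ℝ) (Ω : Set (EN N)) (u : EN N → ℝ) (Du : EN N → EN N) : Prop :=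
  MemLp u (ENNReal.ofReal p) (volume.restrict Ω) ∧
  MemLp Du (ENNReal.ofReal p) (volume.restrict Ω) ∧
  ∃ φ : ℕ → EN N → ℝ,
    (∀ n, ContDiff ℝ (⊤ : ℕ∞) (φ n) ∧ HasCompactSupport (φ n) ∧ tsupport (φ n) ⊆ Ω) ∧
    Tendsto (fun n => ∫ x in Ω, |φ n x - u x| ^ p) atTop (nhds 0) ∧
    Tendsto (fun n => ∫ x in Ω, ‖gradient (φ n) x - Du x‖ ^ p) atTop (nhds 0)

/-- The functional `J_λ`. -/
def Jlam {N : ℕ} (p lam : ℝ) (Ω : Set (EN N)) (A g : EN N → ℝ → ℝ)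
    (u : EN N → ℝ) (Du : EN N → EN N) : ℝ :=
  (1 / p) * ∫ x in Ω, (A x (u x) * ‖Du x‖ ^ p - lam * |u x| ^ p) -
    ∫ x in Ω, ∫ s in (0:ℝ)..(u x), g x s

/-- The pairing `⟨dJ_λ(u), φ⟩`. -/
def dJlam {N : ℕ} (p lam : ℝ) (Ω : Set (EN N)) (A At g : EN N → ℝ → ℝ)
    (u : EN N → ℝ) (Du : EN N → EN N) (φ : EN N → ℝ) (Dφ : EN N → EN N) : ℝ :=
  (∫ x in Ω, A x (u x) * ‖Du x‖ ^ (p - 2) * (inner ℝ (Du x) (Dφ x) : ℝ)) +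
    (1 / p) * (∫ x in Ω, At x (u x) * φ x * ‖Du x‖ ^ p) -
    lam * (∫ x in Ω, |u x| ^ (p - 2) * u x * φ x) -
    ∫ x in Ω, g x (u x) * φ x

/-- `lam ∈ σ(A_p^∞)`: the weighted `p`-Laplacian eigenvalue problem
`−div(A^∞(x)|∇u|^{p−2}∇u) = λ|u|^{p−2}u` in `Ω`, `u = 0` on `∂Ω`,
has a nontrivial weak solution in `W^{1,p}_0(Ω)`. -/
def IsEigenvalue {N : ℕ} (p : ℝ) (Ω : Set (EN N)) (Aco : EN N → ℝ) (lam : ℝ) : Prop :=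
  ∃ (u : EN N → ℝ) (Du : EN N → EN N), MemW1p0 p Ω u Du ∧
    ¬ (∀ᵐ x ∂(volume.restrict Ω), u x = 0) ∧
    ∀ (φ : EN N → ℝ) (Dφ : EN N → EN N), MemW1p0 p Ω φ Dφ →
      ∫ x in Ω, Aco x * ‖Du x‖ ^ (p - 2) * (inner ℝ (Du x) (Dφ x) : ℝ) =
        lam * ∫ x in Ω, |u x| ^ (p - 2) * u x * φ x

/-- Measurability of `x ↦ A x (s x)` for a simple function `s`. -/
lemma meas_comp_simpleFunc {N : ℕ} (A : EN N → ℝ → ℝ)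
    (hA : ∀ t : ℝ, Measurable fun x => A x t) (s : SimpleFunc (EN N) ℝ) :
    Measurable fun x => A x (s x) := by
  have h : ∀ x, A x (s x) =
      ∑ t ∈ s.range, Set.indicator (s ⁻¹' {t}) (fun y => A y t) x := by
    intro x
    rw [Finset.sum_eq_single_of_mem (s x) (s.mem_range_self x)]
    · simp [Set.indicator_of_mem, Set.mem_preimage]
    · intro b _ hb
      apply Set.indicator_of_notMem
      simp only [Set.mem_preimage, Set.mem_singleton_iff]
      exact fun h => hb (h ▸ rfl)
  simp only [h]
  exact Finset.measurable_sum _ fun t _ => ((hA t).indicator (s.measurableSet_fiber t))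

/-- Carathéodory composition: if `A(·,t)` is measurable and `A(x,·)` is a.e. continuous,
then `x ↦ A x (u x)` is a.e. measurable for a.e.-measurable `u`. -/
lemma caratheodory_comp {N : ℕ} {μ : Measure (EN N)} (A : EN N → ℝ → ℝ)
    (hA : ∀ t : ℝ, Measurable fun x => A x t)
    (hcont : ∀ᵐ x ∂μ, Continuous fun t => A x t)
    {u : EN N → ℝ} (hu : AEMeasurable u μ) :
    AEMeasurable (fun x => A x (u x)) μ := by
  set w := hu.mk u with hw
  have hwm : Measurable w := hu.measurable_mk
  have hwu : u =ᵐ[μ] w := hu.ae_eq_mk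
  have key : AEMeasurable (fun x => A x (w x)) μ := by
    have hsep : TopologicalSpace.SeparableSpace (Set.univ : Set ℝ) := by infer_instance
    refine aemeasurable_of_tendsto_metrizable_ae atTop
      (f := fun n x => A x (SimpleFunc.approxOn w hwm Set.univ 0 (Set.mem_univ 0) n x))
      (fun n => (meas_comp_simpleFunc A hA _).aemeasurable) ?_
    filter_upwards [hcont] with x hx
    exact (hx.tendsto (w x)).comp
      (SimpleFunc.tendsto_approxOn hwm (Set.mem_univ 0) (by simp))
  refine key.congr ?_
  filter_upwards [hwu] with x hx
  rw [hx]


/-- Step 1 in the proof of Proposition 3.5. Assume `p > 1` and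
`(H0)`, `(H1)`, `(h0)`, `(h1)`. Let `(u_n) ⊂ X` be a `(PS)_β`-sequence for `J_λ` with
`‖u_n‖ → +∞`, set `v_n = u_n/‖u_n‖`, and suppose `v_n ⇀ v` weakly in `W^{1,p}_0(Ω)`
and `v_n → v` strongly in `L^p(Ω)`. Then `v ≢ 0`. -/
theorem stmt_17 {N : ℕ} (hN : 2 ≤ N) (Ω : Set (EN N))
    (hΩopen : IsOpen Ω) (hΩconn : IsConnected Ω) (hΩbdd : Bornology.IsBounded Ω)
    (p : ℝ) (hp : 1 < p)
    (A At : EN N → ℝ → ℝ)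
    (hAcar : Caratheodory Ω A) (hAtcar : Caratheodory Ω At)
    (hderiv : ∀ᵐ x ∂(volume.restrict Ω), ∀ t : ℝ, HasDerivAt (fun s => A x s) (At x t) t)
    -- (H0)
    (hH0A : H0bound Ω A) (hH0At : H0bound Ω At)
    -- (H1)
    (α₀ : ℝ) (hα₀ : 0 < α₀)
    (hH1 : ∀ᵐ x ∂(volume.restrict Ω), ∀ t : ℝ, α₀ ≤ A x t)
    -- (h0), (h1)
    (f : EN N → ℝ → ℝ) (hfcar : Caratheodory Ω f) (hh0 : H0bound Ω f)
    (lamInf : ℝ) (gInf : EN N → ℝ → ℝ) (hgcar : Caratheodory Ω gInf)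
    (hh1 : ∀ x t, f x t = lamInf * |t| ^ (p - 2) * t + gInf x t)
    (hh1lim : ∀ ε > (0 : ℝ), ∃ R > (0 : ℝ), ∀ᵐ x ∂(volume.restrict Ω),
      ∀ t : ℝ, R ≤ |t| → |gInf x t| ≤ ε * |t| ^ (p - 1))
    (lam : ℝ) (β : ℝ)
    -- a `(PS)_β`-sequence in `X`
    (un : ℕ → EN N → ℝ) (Dun : ℕ → EN N → EN N)
    (hun : ∀ n, MemW1p0 p Ω (un n) (Dun n))
    (hunLinf : ∀ n, ∃ c : ℝ, ∀ᵐ x ∂(volume.restrict Ω), |un n x| ≤ c)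
    (hJconv : Tendsto (fun n => Jlam p lam Ω A gInf (un n) (Dun n)) atTop (nhds β))
    (hdJconv : ∀ ε > (0 : ℝ), ∀ᶠ n in atTop,
      ∀ (φ : EN N → ℝ) (Dφ : EN N → EN N) (c : ℝ), MemW1p0 p Ω φ Dφ →
        (∀ᵐ x ∂(volume.restrict Ω), |φ x| ≤ c) →
        (∫ x in Ω, ‖Dφ x‖ ^ p) ^ (1 / p) + c ≤ 1 →
        |dJlam p lam Ω A At gInf (un n) (Dun n) φ Dφ| ≤ ε)
    -- `‖u_n‖ → +∞`
    (hinfty : Tendsto (fun n => ∫ x in Ω, ‖Dun n x‖ ^ p) atTop atTop)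
    -- the normalized sequence `v_n = u_n / ‖u_n‖`
    (r : ℕ → ℝ) (hr : ∀ n, r n = (∫ x in Ω, ‖Dun n x‖ ^ p) ^ (1 / p))
    (v : EN N → ℝ) (Dv : EN N → EN N) (hv : MemW1p0 p Ω v Dv)
    -- `v_n ⇀ v` weakly in `W^{1,p}_0(Ω)`
    (hweak : ∀ h : EN N → EN N,
      MemLp h (ENNReal.ofReal (p / (p - 1))) (volume.restrict Ω) →
      Tendsto (fun n => ∫ x in Ω, (inner ℝ ((r n)⁻¹ • Dun n x) (h x) : ℝ)) atTop
        (nhds (∫ x in Ω, (inner ℝ (Dv x) (h x) : ℝ))))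
    (hweak' : ∀ h : EN N → ℝ,
      MemLp h (ENNReal.ofReal (p / (p - 1))) (volume.restrict Ω) →
      Tendsto (fun n => ∫ x in Ω, (r n)⁻¹ * un n x * h x) atTop
        (nhds (∫ x in Ω, v x * h x)))
    -- `v_n → v` strongly in `L^p(Ω)`
    (hstrong : Tendsto (fun n => ∫ x in Ω, |(r n)⁻¹ * un n x - v x| ^ p) atTop (nhds 0)) :
    -- `v ≢ 0`
    ¬ (∀ᵐ x ∂(volume.restrict Ω), v x = 0) := by
  intro hcontra
  have hp0 : (0:ℝ) < p := by linarith
  have hpne : p ≠ 0 := ne_of_gt hp0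
  have hp1 : (0:ℝ) ≤ p - 1 := by linarith
  set μ := volume.restrict Ω with hμdef
  haveI hfin : IsFiniteMeasure μ := by
    constructor
    rw [hμdef, Measure.restrict_apply_univ]
    exact hΩbdd.measure_lt_top
  set M : ℝ := (volume Ω).toReal with hMdef
  have hM0 : 0 ≤ M := ENNReal.toReal_nonneg
  set I : ℕ → ℝ := fun n => ∫ x in Ω, ‖Dun n x‖ ^ p with hIdef
  set P : ℕ → ℝ := fun n => ∫ x in Ω, |un n x| ^ p with hPdef
  set sn : ℕ → ℝ := fun n => ∫ x in Ω, |(r n)⁻¹ * un n x - v x| ^ p with hsndef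
  have hPnonneg : ∀ n, 0 ≤ P n := fun n =>
    integral_nonneg fun x => Real.rpow_nonneg (abs_nonneg _) p
  -- integrability of the basic powers
  have hDu_int : ∀ n, Integrable (fun x => ‖Dun n x‖ ^ p) μ := by
    intro n
    have h := (hun n).2.1.integrable_norm_rpow
      (ENNReal.ofReal_pos.mpr hp0).ne' ENNReal.ofReal_ne_top
    simpa [ENNReal.toReal_ofReal hp0.le] using h
  have hu_int : ∀ n, Integrable (fun x => |un n x| ^ p) μ := by
    intro n
    have h := (hun n).1.integrable_norm_rpow
      (ENNReal.ofReal_pos.mpr hp0).ne' ENNReal.ofReal_ne_top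
    simpa [ENNReal.toReal_ofReal hp0.le, Real.norm_eq_abs] using h
  -- a global growth bound for `g∞`
  obtain ⟨R, hR, hgae⟩ := hh1lim 1 one_pos
  obtain ⟨Cf, hCf⟩ := hh0 R hR
  set D : ℝ := |Cf| + |lamInf| * R ^ (p - 1) with hDdef
  have hD0 : 0 ≤ D := by positivity
  have hgbound : ∀ᵐ x ∂μ, ∀ t : ℝ, |gInf x t| ≤ D + |t| ^ (p - 1) := by
    filter_upwards [hgae, hCf] with x hx1 hx2 t
    have htnn : (0:ℝ) ≤ |t| ^ (p-1) := Real.rpow_nonneg (abs_nonneg _) _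
    by_cases ht : R ≤ |t|
    · have h1 := hx1 t ht
      have : (0:ℝ) ≤ |lamInf| * R ^ (p-1) := by positivity
      have h2 : (0:ℝ) ≤ |Cf| := abs_nonneg _
      calc |gInf x t| ≤ 1 * |t| ^ (p-1) := h1
        _ = |t| ^ (p-1) := one_mul _
        _ ≤ D + |t| ^ (p-1) := by rw [hDdef]; linarith
    · push_neg at ht
      have hgt : gInf x t = f x t - lamInf * |t| ^ (p-2) * t := by
        rw [hh1 x t]; ring
      have hft : |f x t| ≤ Cf := hx2 t ht.le
      have habs : |lamInf * |t| ^ (p-2) * t| ≤ |lamInf| * R ^ (p-1) := by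
        rcases eq_or_ne t 0 with h0 | h0
        · simp [h0]
          positivity
        · have h0' : 0 < |t| := abs_pos.mpr h0
          have hkey : |t| ^ (p-2) * |t| = |t| ^ (p-1) := by
            have h2 := Real.rpow_add h0' (p-2) 1
            rw [Real.rpow_one] at h2
            have h3 : p - 2 + 1 = p - 1 := by ring
            rw [h3] at h2
            exact h2.symm
          have h4 : |t| ^ (p-1) ≤ R ^ (p-1) :=
            Real.rpow_le_rpow (abs_nonneg t) ht.le hp1
          calc |lamInf * |t| ^ (p-2) * t|
              = |lamInf| * (|t| ^ (p-2) * |t|) := by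
                rw [abs_mul, abs_mul,
                  abs_of_nonneg (Real.rpow_nonneg (abs_nonneg t) _), mul_assoc]
            _ = |lamInf| * |t| ^ (p-1) := by rw [hkey]
            _ ≤ |lamInf| * R ^ (p-1) :=
                mul_le_mul_of_nonneg_left h4 (abs_nonneg _)
      have h5 : |gInf x t| ≤ |f x t| + |lamInf * |t| ^ (p-2) * t| := by
        rw [hgt]; exact abs_sub _ _
      have h6 : Cf ≤ |Cf| := le_abs_self _
      rw [hDdef]
      linarith
  -- bound on the `G∞` term
  have hT2bound : ∀ n, |∫ x in Ω, ∫ s in (0:ℝ)..(un n x), gInf x s| ≤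
      D * M + (D + 1) * P n := by
    intro n
    have hBint : Integrable (fun x => D + (D+1) * |un n x| ^ p) μ :=
      (integrable_const D).add ((hu_int n).const_mul (D+1))
    have hBval : (∫ x in Ω, (D + (D+1) * |un n x| ^ p)) = D * M + (D+1) * P n := by
      rw [integral_add (integrable_const D) ((hu_int n).const_mul _),
        integral_const_mul, setIntegral_const, smul_eq_mul, measureReal_def]
      rw [hMdef, hPdef]
      ring
    have hRHS0 : 0 ≤ D * M + (D + 1) * P n := by
      have := hPnonneg n
      have : 0 ≤ (D+1) * P n := mul_nonneg (by linarith) (hPnonneg n)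
      have : 0 ≤ D * M := mul_nonneg hD0 hM0
      linarith
    have hptws : ∀ᵐ x ∂μ, |∫ s in (0:ℝ)..(un n x), gInf x s| ≤
        D + (D+1) * |un n x| ^ p := by
      filter_upwards [hgbound] with x hx
      set t := un n x with htdef
      have h1 : ‖∫ s in (0:ℝ)..t, gInf x s‖ ≤ (D + |t| ^ (p-1)) * |t - 0| := by
        apply intervalIntegral.norm_integral_le_of_norm_le_const
        intro s hs
        have hst : |s| ≤ |t| := by
          rcases Set.mem_uIoc.mp hs with ⟨ha, hb⟩ | ⟨ha, hb⟩
          · rw [abs_le]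
            exact ⟨by linarith [abs_nonneg t], hb.trans (le_abs_self t)⟩
          · rw [abs_le]
            exact ⟨by linarith [neg_abs_le t], by linarith [abs_nonneg t]⟩
        have h2 : |s| ^ (p-1) ≤ |t| ^ (p-1) :=
          Real.rpow_le_rpow (abs_nonneg s) hst hp1
        have h3 := hx s
        rw [Real.norm_eq_abs]
        linarith
      rw [Real.norm_eq_abs, sub_zero] at h1
      have hmul : |t| ^ (p-1) * |t| ≤ |t| ^ p := by
        rcases eq_or_ne t 0 with h0 | h0
        · simp [h0, Real.zero_rpow hpne]
        · have h0' : 0 < |t| := abs_pos.mpr h0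
          have h2 := Real.rpow_add h0' (p-1) 1
          rw [Real.rpow_one] at h2
          have h3 : p - 1 + 1 = p := by ring
          rw [h3] at h2
          rw [← h2]
      have htp : |t| ≤ 1 + |t| ^ p := by
        by_cases h : |t| ≤ 1
        · have : (0:ℝ) ≤ |t| ^ p := Real.rpow_nonneg (abs_nonneg _) _
          linarith
        · push_neg at h
          have h2 : |t| ^ (1:ℝ) ≤ |t| ^ p :=
            Real.rpow_le_rpow_of_exponent_le h.le (by linarith)
          rw [Real.rpow_one] at h2
          linarith
      have h3 : (D + |t| ^ (p-1)) * |t| ≤ D + (D+1) * |t| ^ p := by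
        have hD_t : D * |t| ≤ D * (1 + |t| ^ p) :=
          mul_le_mul_of_nonneg_left htp hD0
        have : (D + |t| ^ (p-1)) * |t| = D * |t| + |t| ^ (p-1) * |t| := by ring
        rw [this]
        have hpnn : (0:ℝ) ≤ |t| ^ p := Real.rpow_nonneg (abs_nonneg _) _
        nlinarith
      linarith
    by_cases hint : Integrable (fun x => ∫ s in (0:ℝ)..(un n x), gInf x s) μ
    · calc |∫ x in Ω, ∫ s in (0:ℝ)..(un n x), gInf x s|
          = ‖∫ x in Ω, ∫ s in (0:ℝ)..(un n x), gInf x s‖ := (Real.norm_eq_abs _).symm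
        _ ≤ ∫ x in Ω, ‖∫ s in (0:ℝ)..(un n x), gInf x s‖ :=
            norm_integral_le_integral_norm _
        _ ≤ ∫ x in Ω, (D + (D+1) * |un n x| ^ p) := by
            refine integral_mono_ae hint.norm hBint ?_
            filter_upwards [hptws] with x hx
            simpa [Real.norm_eq_abs] using hx
        _ = D * M + (D+1) * P n := hBval
    · rw [integral_undef hint]
      simpa using hRHS0
  -- lower bound for `J`
  have hT1 : ∀ n, (1/p) * (α₀ * I n - lam * P n - M * (D * M + (D+1) * P n)) ≤
      Jlam p lam Ω A gInf (un n) (Dun n) := by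
    intro n
    have hu_aem : AEMeasurable (un n) μ := (hun n).1.aestronglyMeasurable.aemeasurable
    have hAcomp : AEMeasurable (fun x => A x (un n x)) μ :=
      caratheodory_comp A hAcar.1 hAcar.2 hu_aem
    obtain ⟨c, hc⟩ := hunLinf n
    obtain ⟨CA, hCA⟩ := hH0A (max c 1) (lt_of_lt_of_le one_pos (le_max_right c 1))
    have hAbd : ∀ᵐ x ∂μ, |A x (un n x)| ≤ CA := by
      filter_upwards [hc, hCA] with x h1 h2
      exact h2 _ (h1.trans (le_max_left c 1))
    have hAint : Integrable (fun x => A x (un n x) * ‖Dun n x‖ ^ p) μ := by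
      refine Integrable.mono' ((hDu_int n).const_mul |CA|)
        (hAcomp.aestronglyMeasurable.mul (hDu_int n).aestronglyMeasurable) ?_
      filter_upwards [hAbd] with x hx
      rw [Real.norm_eq_abs, abs_mul,
        abs_of_nonneg (Real.rpow_nonneg (norm_nonneg _) _)]
      exact mul_le_mul_of_nonneg_right (hx.trans (le_abs_self CA))
        (Real.rpow_nonneg (norm_nonneg _) _)
    have hlower : α₀ * I n ≤ ∫ x in Ω, A x (un n x) * ‖Dun n x‖ ^ p := by
      have heq : α₀ * I n = ∫ x in Ω, α₀ * ‖Dun n x‖ ^ p := by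
        rw [integral_const_mul]
      rw [heq]
      refine integral_mono_ae ((hDu_int n).const_mul α₀) hAint ?_
      filter_upwards [hH1] with x hx
      exact mul_le_mul_of_nonneg_right (hx _) (Real.rpow_nonneg (norm_nonneg _) _)
    set C : ℝ := ∫ x in Ω, ∫ s in (0:ℝ)..(un n x), gInf x s with hCdef
    have hCabs : |C| ≤ D * M + (D+1) * P n := hT2bound n
    have hsplit : (∫ x in Ω, (A x (un n x) * ‖Dun n x‖ ^ p - lam * |un n x| ^ p - C)) =
        (∫ x in Ω, A x (un n x) * ‖Dun n x‖ ^ p) - lam * P n - M * C := by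
      have hlam : Integrable (fun x => lam * |un n x| ^ p) μ := (hu_int n).const_mul lam
      have hint1 : Integrable (fun x => A x (un n x) * ‖Dun n x‖ ^ p -
          lam * |un n x| ^ p) μ := hAint.sub hlam
      rw [integral_sub hint1 (integrable_const C),
        integral_sub hAint hlam, integral_const_mul,
        setIntegral_const, smul_eq_mul, measureReal_def]
    rw [Jlam, hsplit]
    have hMC : M * C ≤ M * (D * M + (D+1) * P n) :=
      mul_le_mul_of_nonneg_left ((le_abs_self C).trans hCabs) hM0
    apply mul_le_mul_of_nonneg_left (by linarith) (by positivity)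
  -- the eventual key inequality
  set K1 : ℝ := lam/p + M * (D+1)/p with hK1def
  set K2 : ℝ := D * M * M / p with hK2def
  have hIe : ∀ᶠ n in atTop, (1:ℝ) ≤ I n := hinfty.eventually_ge_atTop 1
  have hkey : ∀ᶠ n in atTop, α₀ / p ≤
      Jlam p lam Ω A gInf (un n) (Dun n) / I n + K1 * sn n + K2 / I n := by
    filter_upwards [hIe] with n hIn
    have hIpos : (0:ℝ) < I n := lt_of_lt_of_le one_pos hIn
    have hrpos : 0 < r n := by
      rw [hr n]
      exact Real.rpow_pos_of_pos hIpos _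
    have hrp : r n ^ p = I n := by
      rw [hr n, ← Real.rpow_mul hIpos.le, one_div_mul_cancel hpne, Real.rpow_one]
    have hsnq : sn n = P n / I n := by
      have hae : (fun x => |(r n)⁻¹ * un n x - v x| ^ p) =ᵐ[μ]
          fun x => (I n)⁻¹ * |un n x| ^ p := by
        filter_upwards [hcontra] with x hx
        rw [hx, sub_zero, abs_mul, Real.mul_rpow (abs_nonneg _) (abs_nonneg _),
          abs_of_nonneg (inv_nonneg.mpr hrpos.le), Real.inv_rpow hrpos.le, hrp]
      show (∫ x in Ω, |(r n)⁻¹ * un n x - v x| ^ p) = P n / I n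
      rw [integral_congr_ae hae, integral_const_mul, inv_mul_eq_div]
    have hJn := hT1 n
    have hexp : (1/p) * (α₀ * I n - lam * P n - M * (D * M + (D+1) * P n)) =
        α₀/p * I n - K1 * P n - K2 := by
      rw [hK1def, hK2def]; ring
    rw [hexp] at hJn
    have key2 : α₀ / p ≤
        (Jlam p lam Ω A gInf (un n) (Dun n) + (K1 * P n + K2)) / I n := by
      rw [le_div_iff₀ hIpos]
      linarith
    calc α₀ / p ≤ _ := key2
      _ = Jlam p lam Ω A gInf (un n) (Dun n) / I n +
          (K1 * (P n / I n) + K2 / I n) := by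
            rw [add_div, add_div, mul_div_assoc]
      _ = _ := by rw [← hsnq]; ring
  -- pass to the limit
  have h1 : Tendsto (fun n => Jlam p lam Ω A gInf (un n) (Dun n) / I n)
      atTop (nhds 0) := hJconv.div_atTop hinfty
  have h2 : Tendsto (fun n => K1 * sn n) atTop
      (nhds (K1 * 0)) := tendsto_const_nhds.mul hstrong
  have h3 : Tendsto (fun n => K2 / I n) atTop (nhds 0) :=
    tendsto_const_nhds.div_atTop hinfty
  have hlim : Tendsto (fun n => Jlam p lam Ω A gInf (un n) (Dun n) / I n +
      K1 * sn n + K2 / I n) atTop (nhds 0) := by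
    simpa using (h1.add h2).add h3
  have hfinal : α₀ / p ≤ 0 := ge_of_tendsto hlim hkey
  have : 0 < α₀ / p := div_pos hα₀ hp0
  linarith

end
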